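/- Elliptic integral evaluations of the scattering Fourier coefficients: with t = k^{-2} ∈ (0,1), F_0 = (2/π)K(t), F_1 = F_{-1} = (2/π)t^{-1/2}[K(t) - E(t)], F̄_0 = (2/π)[(t-1)K(t) + 2E(t)], and F̄_1 = F̄_{-1} = -(2/(3π)) t^{-1/2}[(t-1)K(t) + (t+1)E(t)], where K and E are the complete elliptic integrals of the first and second kind with parameter t (i.e. K(t) = ∫_0^{π/2} (1 - t sin²θ)^{-1/2} dθ, E(t) = ∫_0^{π/2} (1 - t sin²θ)^{1/2} dθ). -/

import Mathlib

open Real intervalIntegral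

/-- Complete elliptic integral of the first kind with parameter `t`. -/
noncomputable def ellK (t : ℝ) : ℝ :=
  ∫ θ in (0:ℝ)..(π/2), (1 - t * Real.sin θ ^ 2) ^ (-(1:ℝ)/2)

/-- Complete elliptic integral of the second kind with parameter `t`. -/
noncomputable def ellE (t : ℝ) : ℝ :=
  ∫ θ in (0:ℝ)..(π/2), (1 - t * Real.sin θ ^ 2) ^ ((1:ℝ)/2)

/-- The scattering Fourier coefficient
`F_n = (1/2π)∫_{-π}^π e^{inθ}(1-√t e^{iθ})^{-1/2}(1-√t e^{-iθ})^{-1/2} dθ`. -/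
noncomputable def Fcoeff (t : ℝ) (n : ℤ) : ℂ :=
  (1 / (2 * (π : ℂ))) * ∫ θ in (-π)..π,
    Complex.exp (Complex.I * n * θ) *
      (1 - (Real.sqrt t : ℂ) * Complex.exp (Complex.I * θ)) ^ (-((1 : ℂ) / 2)) *
      (1 - (Real.sqrt t : ℂ) * Complex.exp (-(Complex.I * θ))) ^ (-((1 : ℂ) / 2))

/-- The reciprocal scattering Fourier coefficient
`F̄_n = (1/2π)∫_{-π}^π e^{-inθ}(1-√t e^{iθ})^{1/2}(1-√t e^{-iθ})^{1/2} dθ`. -/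
noncomputable def Fbcoeff (t : ℝ) (n : ℤ) : ℂ :=
  (1 / (2 * (π : ℂ))) * ∫ θ in (-π)..π,
    Complex.exp (-(Complex.I * n * θ)) *
      (1 - (Real.sqrt t : ℂ) * Complex.exp (Complex.I * θ)) ^ ((1 : ℂ) / 2) *
      (1 - (Real.sqrt t : ℂ) * Complex.exp (-(Complex.I * θ))) ^ ((1 : ℂ) / 2)

/-!
Write `(1 - z) ^ σ = ∑ bₘ zᵐ` (binomial series, with `|bₘ| ≤ 1` for `|σ| ≤ 1`). On the circle
`|z| = √t` the product `f (√t e^{iθ}) f (√t e^{-iθ})` is a double series in `e^{i(p-q)θ}`, so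
orthogonality gives `F_n = ∑ₘ bₘ b_{m+n} t^{m+n/2}` for `n ≥ 0`, and `θ ↦ -θ` gives
`F_{-n} = F_n`. Expanding the integrands of `K` and `E` in powers of `t sin² θ` and integrating
termwise with Wallis' formula gives `(2/π) K = ∑ aₘ² tᵐ` and `(2/π) E = ∑ cₘ aₘ tᵐ`, where `a`, `c`
are the coefficients for `σ = -1/2` and `σ = 1/2`. Since `a_{m+1} = (2m+1)/(2m+2) aₘ` and
`c_{m+1} = -aₘ/(2m+2)`, each of `∑ aₘ a_{m+1} t^{m+1}`, `∑ cₘ² tᵐ` and `∑ cₘ c_{m+1} t^{m+1}` is a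
linear combination of these two series.
-/

lemma hasSum_succ_iff_of_eq_zero {G : Type*} [AddCommGroup G] [TopologicalSpace G]
    [IsTopologicalAddGroup G] {f : ℕ → G} {s : G} (h : f 0 = 0) :
    HasSum (fun m => f (m + 1)) s ↔ HasSum f s := by
  conv_rhs => rw [← hasSum_nat_add_iff' 1]
  simp [h]

lemma hasSum_intervalIntegral_of_norm_le {ι E : Type*} [Countable ι] [NormedAddCommGroup E]
    [NormedSpace ℝ E] {F : ι → ℝ → E} {f : ℝ → E} {c : ι → ℝ} {a b : ℝ}
    (hF : ∀ i, Continuous (F i)) (hc : Summable c) (hFc : ∀ i x, ‖F i x‖ ≤ c i)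
    (hf : ∀ x, HasSum (fun i => F i x) (f x)) :
    HasSum (fun i => ∫ x in a..b, F i x) (∫ x in a..b, f x) :=
  intervalIntegral.hasSum_integral_of_dominated_convergence (fun i _ => c i)
    (fun i => (hF i).aestronglyMeasurable) (fun i => .of_forall fun x _ => hFc i x)
    (.of_forall fun _ _ => hc) intervalIntegrable_const (.of_forall fun x _ => hf x)

noncomputable def oneSubPowCoeff (σ : ℝ) (m : ℕ) : ℝ := (-1) ^ m * Ring.choose σ m

@[simp]
lemma oneSubPowCoeff_zero (σ : ℝ) : oneSubPowCoeff σ 0 = 1 := by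
  simp [oneSubPowCoeff]

lemma oneSubPowCoeff_succ (σ : ℝ) (m : ℕ) :
    oneSubPowCoeff σ (m + 1) = oneSubPowCoeff σ m * ((m - σ) / (m + 1)) := by
  have hchoose : Ring.choose σ (m + 1) = (σ - m) / (m + 1) * Ring.choose σ m := by
    rw [Ring.choose_eq_smul, Ring.choose_eq_smul, descPochhammer_succ_right,
      Polynomial.smeval_mul]
    simp only [Nat.factorial_succ, Nat.cast_mul, Nat.cast_add, Nat.cast_one, mul_inv_rev,
      Polynomial.smeval_sub, Polynomial.smeval_X, pow_one, Polynomial.smeval_natCast, pow_zero,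
      nsmul_eq_mul, mul_one, smul_eq_mul]
    field_simp
  rw [oneSubPowCoeff, oneSubPowCoeff, hchoose]
  ring

lemma abs_oneSubPowCoeff_le_one {σ : ℝ} (h₁ : -1 ≤ σ) (h₂ : σ ≤ 1) (m : ℕ) :
    |oneSubPowCoeff σ m| ≤ 1 := by
  induction m with
  | zero => simp
  | succ m ih =>
    have hratio : |((m : ℝ) - σ) / (m + 1)| ≤ 1 := by
      rw [abs_div, abs_of_pos (by positivity : (0:ℝ) < m + 1), div_le_one (by positivity),
        abs_le]
      constructor <;> linarith [(Nat.cast_nonneg m : (0:ℝ) ≤ m)]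
    rw [oneSubPowCoeff_succ, abs_mul]
    exact mul_le_one₀ ih (abs_nonneg _) hratio

lemma summable_abs_oneSubPowCoeff_mul_pow {σ : ℝ} (h₁ : -1 ≤ σ) (h₂ : σ ≤ 1) {k : ℝ}
    (hk₀ : 0 ≤ k) (hk₁ : k < 1) : Summable fun m => |oneSubPowCoeff σ m| * k ^ m :=
  (summable_geometric_of_lt_one hk₀ hk₁).of_nonneg_of_le (fun m => by positivity)
    fun m => mul_le_of_le_one_left (by positivity) (abs_oneSubPowCoeff_le_one h₁ h₂ m)

lemma hasSum_oneSubPowCoeff_mul_cpow (σ : ℝ) {z : ℂ} (hz : ‖z‖ < 1) :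
    HasSum (fun m => (oneSubPowCoeff σ m : ℂ) * z ^ m) ((1 - z) ^ (σ : ℂ)) := by
  have h := Complex.one_add_cpow_hasFPowerSeriesOnBall_zero (a := σ) |>.hasSum (y := -z)
    (by simpa [Metric.mem_eball, enorm_eq_nnnorm, ← NNReal.coe_lt_one] using hz)
  simp only [binomialSeries_apply, List.ofFn_const, List.prod_replicate, smul_eq_mul,
    zero_sub, ← sub_eq_add_neg] at h
  have hcoeff : (fun m => (oneSubPowCoeff σ m : ℂ) * z ^ m) =
      fun m => Ring.choose (σ : ℂ) m * (-z) ^ m := by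
    funext m
    simp only [oneSubPowCoeff, neg_pow z]
    push_cast
    ring
  rwa [hcoeff]

lemma hasSum_oneSubPowCoeff_mul_rpow (σ : ℝ) {x : ℝ} (hx : |x| < 1) :
    HasSum (fun m => oneSubPowCoeff σ m * x ^ m) ((1 - x) ^ σ) := by
  have h := hasSum_oneSubPowCoeff_mul_cpow σ (z := x) (by simpa using hx)
  rw [← Complex.ofReal_one, ← Complex.ofReal_sub,
    ← Complex.ofReal_cpow (by linarith [le_abs_self x])] at h
  exact_mod_cast h

lemma oneSubPowCoeff_neg_half_succ (m : ℕ) :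
    oneSubPowCoeff (-1/2) (m + 1) = (2 * m + 1) / (2 * m + 2) * oneSubPowCoeff (-1/2) m := by
  rw [oneSubPowCoeff_succ]
  field_simp
  ring

lemma one_sub_two_mul_oneSubPowCoeff_half (m : ℕ) :
    (1 - 2 * m) * oneSubPowCoeff (1/2) m = oneSubPowCoeff (-1/2) m := by
  induction m with
  | zero => simp
  | succ m ih =>
    rw [oneSubPowCoeff_succ, oneSubPowCoeff_succ]
    push_cast
    linear_combination ((m + 1/2) / (m + 1)) * ih

lemma oneSubPowCoeff_half_succ (m : ℕ) :
    oneSubPowCoeff (1/2) (m + 1) = -oneSubPowCoeff (-1/2) m / (2 * m + 2) := by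
  rw [oneSubPowCoeff_succ, ← one_sub_two_mul_oneSubPowCoeff_half]
  field_simp
  ring

lemma integral_sin_pow_even_pi_div_two (m : ℕ) :
    ∫ θ in (0:ℝ)..(π/2), sin θ ^ (2 * m) = π / 2 * oneSubPowCoeff (-1/2) m := by
  induction m with
  | zero => simp
  | succ m ih =>
    rw [Nat.mul_succ, integral_sin_pow, ih, oneSubPowCoeff_succ]
    simp only [sin_zero, cos_pi_div_two, zero_pow (Nat.succ_ne_zero _), zero_mul, mul_zero,
      sub_self, zero_div, zero_add]
    push_cast
    field_simp
    ring

lemma hasSum_integral_comp_mul_sin_sq {b : ℕ → ℝ} {g : ℝ → ℝ} {t : ℝ} (ht : 0 ≤ t)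
    (hb : Summable fun m => |b m| * t ^ m)
    (hg : ∀ x ∈ Set.Icc 0 t, HasSum (fun m => b m * x ^ m) (g x)) :
    HasSum (fun m => b m * oneSubPowCoeff (-1/2) m * t ^ m)
      (2 / π * ∫ θ in (0:ℝ)..(π/2), g (t * sin θ ^ 2)) := by
  have hswap : HasSum (fun m => ∫ θ in (0:ℝ)..(π/2), b m * t ^ m * sin θ ^ (2 * m))
      (∫ θ in (0:ℝ)..(π/2), g (t * sin θ ^ 2)) := by
    refine hasSum_intervalIntegral_of_norm_le (fun m => by fun_prop) hb (fun m θ => ?_)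
      (fun θ => ?_)
    · rw [norm_mul, norm_mul, norm_pow, norm_pow, Real.norm_eq_abs, Real.norm_eq_abs,
        Real.norm_eq_abs, abs_of_nonneg ht]
      exact mul_le_of_le_one_right (by positivity)
        (pow_le_one₀ (abs_nonneg _) (abs_sin_le_one θ))
    · have hx : t * sin θ ^ 2 ∈ Set.Icc 0 t :=
        ⟨by positivity, mul_le_of_le_one_right ht (sin_sq_le_one θ)⟩
      have hterm : (fun m => b m * (t * sin θ ^ 2) ^ m) =
          fun m => b m * t ^ m * sin θ ^ (2 * m) := funext fun m => by ring
      exact hterm ▸ hg _ hx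
  have hterm : ∀ m, 2 / π * ∫ θ in (0:ℝ)..(π/2), b m * t ^ m * sin θ ^ (2 * m) =
      b m * oneSubPowCoeff (-1/2) m * t ^ m := by
    intro m
    rw [intervalIntegral.integral_const_mul, integral_sin_pow_even_pi_div_two]
    field_simp
  simpa only [hterm] using hswap.mul_left (2 / π)

lemma hasSum_ellK {t : ℝ} (ht₀ : 0 ≤ t) (ht₁ : t < 1) :
    HasSum (fun m => oneSubPowCoeff (-1/2) m * oneSubPowCoeff (-1/2) m * t ^ m)
      (2 / π * ellK t) :=
  hasSum_integral_comp_mul_sin_sq ht₀ (summable_abs_oneSubPowCoeff_mul_pow (by norm_num)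
    (by norm_num) ht₀ ht₁) fun x hx => hasSum_oneSubPowCoeff_mul_rpow _
      (by rw [abs_of_nonneg hx.1]; linarith [hx.2])

lemma hasSum_ellE {t : ℝ} (ht₀ : 0 ≤ t) (ht₁ : t < 1) :
    HasSum (fun m => oneSubPowCoeff (1/2) m * oneSubPowCoeff (-1/2) m * t ^ m)
      (2 / π * ellE t) :=
  hasSum_integral_comp_mul_sin_sq ht₀ (summable_abs_oneSubPowCoeff_mul_pow (by norm_num)
    (by norm_num) ht₀ ht₁) fun x hx => hasSum_oneSubPowCoeff_mul_rpow _
      (by rw [abs_of_nonneg hx.1]; linarith [hx.2])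

lemma hasSum_ellK_sub_ellE {t : ℝ} (ht₀ : 0 ≤ t) (ht₁ : t < 1) :
    HasSum (fun m => oneSubPowCoeff (-1/2) m * oneSubPowCoeff (-1/2) (m + 1) * t ^ (m + 1))
      (2 / π * (ellK t - ellE t)) := by
  have h := ((hasSum_ellK ht₀ ht₁).sub (hasSum_ellE ht₀ ht₁))
  rw [← hasSum_succ_iff_of_eq_zero (by simp), ← mul_sub] at h
  refine h.congr_fun fun m => ?_
  rw [oneSubPowCoeff_neg_half_succ, oneSubPowCoeff_half_succ]
  field_simp
  ring

lemma hasSum_oneSubPowCoeff_half_mul_self {t : ℝ} (ht₀ : 0 ≤ t) (ht₁ : t < 1) :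
    HasSum (fun m => oneSubPowCoeff (1/2) m * oneSubPowCoeff (1/2) m * t ^ m)
      (2 / π * ((t - 1) * ellK t + 2 * ellE t)) := by
  have hK := hasSum_ellK ht₀ ht₁
  have hdiff : HasSum (fun m => (oneSubPowCoeff (1/2) m - oneSubPowCoeff (-1/2) m) ^ 2 * t ^ m)
      (t * (2 / π * ellK t)) := by
    rw [← hasSum_succ_iff_of_eq_zero (by simp)]
    refine (hK.mul_left t).congr_fun fun m => ?_
    rw [oneSubPowCoeff_neg_half_succ, oneSubPowCoeff_half_succ]
    field_simp
    ring
  rw [show 2 / π * ((t - 1) * ellK t + 2 * ellE t) =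
    t * (2 / π * ellK t) - 2 / π * ellK t + 2 * (2 / π * ellE t) by ring]
  exact ((hdiff.sub hK).add ((hasSum_ellE ht₀ ht₁).mul_left 2)).congr_fun fun m => by ring

lemma hasSum_oneSubPowCoeff_half_mul_succ {t : ℝ} (ht₀ : 0 ≤ t) (ht₁ : t < 1) :
    HasSum (fun m => oneSubPowCoeff (1/2) m * oneSubPowCoeff (1/2) (m + 1) * t ^ (m + 1))
      (-(2 / (3 * π)) * ((t - 1) * ellK t + (t + 1) * ellE t)) := by
  have h := ((((hasSum_ellK ht₀ ht₁).add (hasSum_ellE ht₀ ht₁)).mul_left t).sub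
    (hasSum_ellK_sub_ellE ht₀ ht₁)).mul_left (-(1/3))
  rw [show -(1/3) * (t * (2 / π * ellK t + 2 / π * ellE t) - 2 / π * (ellK t - ellE t)) =
    -(2 / (3 * π)) * ((t - 1) * ellK t + (t + 1) * ellE t) by ring] at h
  refine h.congr_fun fun m => ?_
  have hrel := one_sub_two_mul_oneSubPowCoeff_half m
  rw [oneSubPowCoeff_neg_half_succ, oneSubPowCoeff_half_succ]
  -- otherwise `field_simp` rewrites the argument `-1/2` to `-(1/2)` in some occurrences only
  generalize oneSubPowCoeff (-1/2) m = a at *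
  field_simp
  linear_combination (-a * t ^ (m + 1)) * hrel

noncomputable def fourierProductCoeff (f : ℂ → ℂ) (k : ℝ) (n : ℤ) : ℂ :=
  (1 / (2 * (π : ℂ))) * ∫ θ in (-π)..π,
    Complex.exp (Complex.I * n * θ) * f (k * Complex.exp (Complex.I * θ)) *
      f (k * Complex.exp (-(Complex.I * θ)))

lemma fourierProductCoeff_neg (f : ℂ → ℂ) (k : ℝ) (n : ℤ) :
    fourierProductCoeff f k (-n) = fourierProductCoeff f k n := by
  rw [fourierProductCoeff, fourierProductCoeff, ← neg_neg (π : ℝ),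
    ← intervalIntegral.integral_comp_neg, neg_neg]
  congr 2 with θ
  push_cast
  simp only [mul_neg, neg_mul, neg_neg]
  ring

lemma integral_exp_int_mul_I (d : ℤ) :
    ∫ θ in (-π)..π, Complex.exp (Complex.I * d * θ) = (if d = 0 then 2 * π else 0 : ℂ) := by
  split_ifs with hd
  · simp only [hd, Int.cast_zero, mul_zero, zero_mul, Complex.exp_zero, integral_const,
      sub_neg_eq_add, Complex.real_smul, Complex.ofReal_add, mul_one]
    ring
  · have hc : Complex.I * d ≠ 0 := mul_ne_zero Complex.I_ne_zero (by exact_mod_cast hd)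
    rw [integral_exp_mul_complex hc, div_eq_zero_iff, sub_eq_zero]
    left
    rw [Complex.exp_eq_exp_iff_exists_int]
    exact ⟨d, by push_cast; ring⟩

lemma hasSum_exp_mul_comp_mul_comp {f : ℂ → ℂ} {b : ℕ → ℂ} {k : ℝ} (hk : 0 ≤ k)
    (hb : Summable fun m => ‖b m‖ * k ^ m)
    (hf : ∀ z : ℂ, ‖z‖ = k → HasSum (fun m => b m * z ^ m) (f z)) (n : ℤ) (θ : ℝ) :
    HasSum (fun p : ℕ × ℕ => b p.1 * b p.2 * k ^ (p.1 + p.2) *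
        Complex.exp (Complex.I * ((n + p.1 - p.2 : ℤ) : ℂ) * θ))
      (Complex.exp (Complex.I * n * θ) * f (k * Complex.exp (Complex.I * θ)) *
        f (k * Complex.exp (-(Complex.I * θ)))) := by
  have hnorm : ∀ w : ℂ, ‖w.exp‖ = 1 → ‖(k : ℂ) * w.exp‖ = k := fun w hw => by
    rw [norm_mul, hw, mul_one, Complex.norm_real, Real.norm_of_nonneg hk]
  have hsummable : ∀ z : ℂ, ‖z‖ = k → Summable fun m => ‖b m * z ^ m‖ := fun z hz => by
    simpa only [norm_mul, norm_pow, hz] using hb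
  have hpos := hnorm _ (Complex.norm_exp_I_mul_ofReal θ)
  have hneg := hnorm (-(Complex.I * θ)) (by simpa using Complex.norm_exp_I_mul_ofReal (-θ))
  have hprod := (hf _ hpos).mul (hf _ hneg) (summable_mul_of_summable_norm
    (f := fun m => b m * (k * Complex.exp (Complex.I * θ)) ^ m)
    (g := fun m => b m * (k * Complex.exp (-(Complex.I * θ))) ^ m)
    (hsummable _ hpos) (hsummable _ hneg))
  rw [mul_assoc]
  refine (hprod.mul_left _).congr_fun fun p => ?_
  have hexp : Complex.exp (Complex.I * ((n + p.1 - p.2 : ℤ) : ℂ) * θ) =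
      Complex.exp (Complex.I * n * θ) * (Complex.exp (Complex.I * θ) ^ p.1 *
        Complex.exp (-(Complex.I * θ)) ^ p.2) := by
    rw [← Complex.exp_nat_mul, ← Complex.exp_nat_mul, ← Complex.exp_add, ← Complex.exp_add]
    push_cast
    ring_nf
  rw [hexp, mul_pow, mul_pow]
  ring

lemma hasSum_fourierProductCoeff {f : ℂ → ℂ} {b : ℕ → ℂ} {k : ℝ} (hk : 0 ≤ k)
    (hb : Summable fun m => ‖b m‖ * k ^ m)
    (hf : ∀ z : ℂ, ‖z‖ = k → HasSum (fun m => b m * z ^ m) (f z)) (n : ℕ) :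
    HasSum (fun m => b m * b (m + n) * k ^ (2 * m + n)) (fourierProductCoeff f k n) := by
  set T : ℕ × ℕ → ℝ → ℂ := fun p θ => b p.1 * b p.2 * k ^ (p.1 + p.2) *
    Complex.exp (Complex.I * ((n + p.1 - p.2 : ℤ) : ℂ) * θ) with hT
  have hswap : HasSum (fun p => ∫ θ in (-π)..π, T p θ) (∫ θ in (-π)..π,
      Complex.exp (Complex.I * n * θ) * f (k * Complex.exp (Complex.I * θ)) *
        f (k * Complex.exp (-(Complex.I * θ)))) := by
    refine hasSum_intervalIntegral_of_norm_le (fun p => by fun_prop)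
      (hb.mul_of_nonneg hb (fun m => by positivity) (fun m => by positivity)) (fun p θ => ?_)
      (hasSum_exp_mul_comp_mul_comp hk hb hf n)
    have hexp : ‖Complex.exp (Complex.I * ((n + p.1 - p.2 : ℤ) : ℂ) * θ)‖ = 1 := by
      simpa [mul_assoc] using Complex.norm_exp_I_mul_ofReal ((n + p.1 - p.2 : ℤ) * θ)
    simp only [hT, norm_mul, hexp, norm_pow, Complex.norm_real, Real.norm_of_nonneg hk, pow_add]
    exact le_of_eq (by ring)
  -- orthogonality: only the terms with `p.2 = p.1 + n` survive integration
  have hTint : ∀ p : ℕ × ℕ, ∫ θ in (-π)..π, T p θ = b p.1 * b p.2 * k ^ (p.1 + p.2) *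
      (if (n + p.1 - p.2 : ℤ) = 0 then 2 * π else 0 : ℂ) := fun p => by
    rw [hT, intervalIntegral.integral_const_mul, integral_exp_int_mul_I]
  have hinj : Function.Injective fun m : ℕ => (m, m + n) := fun m m' h => (Prod.ext_iff.1 h).1
  rw [← hinj.hasSum_iff (fun p hp => ?_)] at hswap
  · refine (hswap.mul_left (1 / (2 * (π : ℂ)))).congr_fun fun m => ?_
    rw [Function.comp_apply, hTint, if_pos (by push_cast; ring)]
    field_simp
    ring
  · rw [hTint, if_neg, mul_zero]
    intro h0
    exact hp ⟨p.1, Prod.ext rfl (by simp only; omega)⟩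

lemma hasSum_fourierProductCoeff_one_sub_cpow {σ : ℝ} (hσ₁ : -1 ≤ σ) (hσ₂ : σ ≤ 1) {k : ℝ}
    (hk₀ : 0 ≤ k) (hk₁ : k < 1) (n : ℕ) :
    HasSum (fun m => ((oneSubPowCoeff σ m * oneSubPowCoeff σ (m + n) * k ^ (2 * m + n) : ℝ) : ℂ))
      (fourierProductCoeff (fun z => (1 - z) ^ (σ : ℂ)) k n) := by
  push_cast
  refine hasSum_fourierProductCoeff hk₀ ?_ (fun z hz => ?_) n
  · simpa using summable_abs_oneSubPowCoeff_mul_pow hσ₁ hσ₂ hk₀ hk₁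
  · exact hasSum_oneSubPowCoeff_mul_cpow σ (hz ▸ hk₁)

lemma fourierProductCoeff_one_sub_cpow_zero {σ : ℝ} (hσ₁ : -1 ≤ σ) (hσ₂ : σ ≤ 1) {t s : ℝ}
    (ht₀ : 0 ≤ t) (ht₁ : t < 1)
    (hs : HasSum (fun m => oneSubPowCoeff σ m * oneSubPowCoeff σ m * t ^ m) s) :
    fourierProductCoeff (fun z => (1 - z) ^ (σ : ℂ)) √t 0 = s := by
  have h := hasSum_fourierProductCoeff_one_sub_cpow hσ₁ hσ₂ (sqrt_nonneg t)
    ((sqrt_lt' one_pos).2 (by simpa using ht₁)) 0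
  simp only [add_zero, Nat.cast_zero, pow_mul, sq_sqrt ht₀] at h
  exact h.unique (Complex.hasSum_ofReal.2 hs)

lemma fourierProductCoeff_one_sub_cpow_one {σ : ℝ} (hσ₁ : -1 ≤ σ) (hσ₂ : σ ≤ 1) {t s : ℝ}
    (ht₀ : 0 < t) (ht₁ : t < 1)
    (hs : HasSum (fun m => oneSubPowCoeff σ m * oneSubPowCoeff σ (m + 1) * t ^ (m + 1)) s) :
    fourierProductCoeff (fun z => (1 - z) ^ (σ : ℂ)) √t 1 = (t ^ (-(1:ℝ)/2) * s : ℝ) := by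
  have h := hasSum_fourierProductCoeff_one_sub_cpow hσ₁ hσ₂ (sqrt_nonneg t)
    ((sqrt_lt' one_pos).2 (by simpa using ht₁)) 1
  rw [Nat.cast_one] at h
  refine h.unique (Complex.hasSum_ofReal.2 ((hs.mul_left _).congr_fun fun m => ?_))
  have hsqrt : 0 < √t := sqrt_pos.2 ht₀
  have hpow : t ^ (m + 1) = √t ^ (2 * m + 1) * √t := by
    rw [← pow_succ, show 2 * m + 1 + 1 = 2 * (m + 1) by ring, pow_mul, sq_sqrt ht₀.le]
  rw [show -(1:ℝ)/2 = -(1/2) by ring, rpow_neg ht₀.le, ← sqrt_eq_rpow, hpow]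
  field_simp

lemma Fcoeff_eq_fourierProductCoeff (t : ℝ) (n : ℤ) :
    Fcoeff t n = fourierProductCoeff (fun z => (1 - z) ^ ((-1/2 : ℝ) : ℂ)) √t n := by
  rw [Fcoeff, fourierProductCoeff, show ((-1/2 : ℝ) : ℂ) = -((1 : ℂ) / 2) by push_cast; ring]

lemma Fbcoeff_eq_fourierProductCoeff (t : ℝ) (n : ℤ) :
    Fbcoeff t n = fourierProductCoeff (fun z => (1 - z) ^ ((1/2 : ℝ) : ℂ)) √t (-n) := by
  rw [Fbcoeff, fourierProductCoeff, show ((1/2 : ℝ) : ℂ) = (1 : ℂ) / 2 by push_cast; ring]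
  congr 2 with θ
  push_cast
  ring_nf

/-- Complete elliptic integral evaluations of the scattering Fourier coefficients. -/
theorem scattering_fourier_elliptic (t : ℝ) (ht0 : 0 < t) (ht1 : t < 1) :
    Fcoeff t 0 = (((2 / π) * ellK t : ℝ) : ℂ) ∧
    Fcoeff t 1 = (((2 / π) * t ^ (-(1:ℝ)/2) * (ellK t - ellE t) : ℝ) : ℂ) ∧
    Fcoeff t (-1) = (((2 / π) * t ^ (-(1:ℝ)/2) * (ellK t - ellE t) : ℝ) : ℂ) ∧
    Fbcoeff t 0 = (((2 / π) * ((t - 1) * ellK t + 2 * ellE t) : ℝ) : ℂ) ∧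
    Fbcoeff t 1 = ((-(2 / (3 * π)) * t ^ (-(1:ℝ)/2) *
      ((t - 1) * ellK t + (t + 1) * ellE t) : ℝ) : ℂ) ∧
    Fbcoeff t (-1) = ((-(2 / (3 * π)) * t ^ (-(1:ℝ)/2) *
      ((t - 1) * ellK t + (t + 1) * ellE t) : ℝ) : ℂ) := by
  have hF0 := fourierProductCoeff_one_sub_cpow_zero (by norm_num) (by norm_num) ht0.le ht1
    (hasSum_ellK ht0.le ht1)
  have hF1 := fourierProductCoeff_one_sub_cpow_one (by norm_num) (by norm_num) ht0 ht1
    (hasSum_ellK_sub_ellE ht0.le ht1)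
  have hFb0 := fourierProductCoeff_one_sub_cpow_zero (by norm_num) (by norm_num) ht0.le ht1
    (hasSum_oneSubPowCoeff_half_mul_self ht0.le ht1)
  have hFb1 := fourierProductCoeff_one_sub_cpow_one (by norm_num) (by norm_num) ht0 ht1
    (hasSum_oneSubPowCoeff_half_mul_succ ht0.le ht1)
  refine ⟨?_, ?_, ?_, ?_, ?_, ?_⟩
  · rw [Fcoeff_eq_fourierProductCoeff, hF0]
  · rw [Fcoeff_eq_fourierProductCoeff, hF1]; push_cast; ring
  · rw [Fcoeff_eq_fourierProductCoeff, fourierProductCoeff_neg, hF1]; push_cast; ring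
  · rw [Fbcoeff_eq_fourierProductCoeff, neg_zero, hFb0]
  · rw [Fbcoeff_eq_fourierProductCoeff, fourierProductCoeff_neg, hFb1]; push_cast; ring
  · rw [Fbcoeff_eq_fourierProductCoeff, neg_neg, hFb1]; push_cast; ring
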